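/- Let 𝒞 be a Z2Z4-additive code of type (α,β;γ,δ;κ) and C = Φ(𝒞). If rank(C) = γ+2δ+r̄ and ker(C) = γ+2δ−k̄ with k̄ ≥ 2, then 1 ≤ r̄ ≤ k̄(k̄−1)/2. -/

import Mathlib

/-- The ambient group `Z2^α × Z4^β`, with componentwise ring structure
(so `u * v` is the componentwise product). -/
abbrev Amb (α β : ℕ) := (Fin α → ZMod 2) × (Fin β → ZMod 4)

/-- The binary space `Z2^α × (Z2²)^β ≅ Z2^(α+2β)`. -/
abbrev Bin (α β : ℕ) := (Fin α → ZMod 2) × (Fin β → ZMod 2 × ZMod 2)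

/-- The Gray map `φ : Z4 → Z2²` with `φ(0)=(0,0), φ(1)=(0,1), φ(2)=(1,1), φ(3)=(1,0)`. -/
def grayPair (y : ZMod 4) : ZMod 2 × ZMod 2 :=
  match y.val with
  | 0 => (0, 0)
  | 1 => (0, 1)
  | 2 => (1, 1)
  | _ => (1, 0)

/-- The extended Gray map `Φ : Z2^α × Z4^β → Z2^(α+2β)`. -/
def Phi {α β : ℕ} (u : Amb α β) : Bin α β :=
  (u.1, fun i => grayPair (u.2 i))

/-- The kernel `K(C) = {x | x + C = C}` of a binary code. -/
def kernelK {α β : ℕ} (C : Set (Bin α β)) : Set (Bin α β) :=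
  {x | (fun y => x + y) '' C = C}

/-- The rank of a binary code: the `Z2`-dimension of its linear span. -/
noncomputable def rankOf {α β : ℕ} (C : Set (Bin α β)) : ℕ :=
  Module.finrank (ZMod 2) (Submodule.span (ZMod 2) C)

/-- The dimension of the kernel of a binary code. -/
noncomputable def kerDim {α β : ℕ} (C : Set (Bin α β)) : ℕ :=
  Module.finrank (ZMod 2) (Submodule.span (ZMod 2) (kernelK C))

/-- A `Z2Z4`-additive code `C ⊆ Z2^α × Z4^β` is of type `(α,β;γ,δ;κ)`:
`|C| = 2^(γ+2δ)`, the number of elements `x` with `2x = 0` is `2^(γ+δ)`, and `κ` is the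
`Z2`-dimension of the projection onto the first `α` coordinates of `{x ∈ C | 2x = 0}`. -/
def IsTypeOf (α β γ δ κ : ℕ) (C : AddSubgroup (Amb α β)) : Prop :=
  Nat.card C = 2 ^ (γ + 2 * δ) ∧
  Nat.card {x : Amb α β | x ∈ C ∧ 2 • x = 0} = 2 ^ (γ + δ) ∧
  Module.finrank (ZMod 2)
    (Submodule.span (ZMod 2) (Prod.fst '' {x : Amb α β | x ∈ C ∧ 2 • x = 0})) = κ

/-!
Everything rests on the identity `Φ(u + v) = Φ(u) + Φ(v) + Φ(2uv)`. It shows that the kernel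
of `Φ(C)` is `Φ(K)` for the subgroup `K = {u ∈ C | 2uv ∈ C for all v ∈ C}`, which contains
`2C`. So `C/K` is a `Z2`-space of dimension `k̄`, and with lifts `u₁, …, u_k̄` of a basis every
codeword is `k + ∑_{i ∈ S} uᵢ` with `k ∈ K`. Expanding `Φ` of such a sum shows that `⟨Φ(C)⟩` is
spanned by `Φ(K)`, the `Φ(uᵢ)` and the `Φ(2uᵢuⱼ)` with `i ≠ j` unordered, whence
`r̄ ≤ k̄(k̄-1)/2`. If `r̄ = 0`, then `Φ(C)` is as large as its span, hence linear and equal to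
its own kernel, which forces `k̄ = 0`.
-/

open Pointwise

lemma natCard_eq_two_pow_finrank (V : Type*) [AddCommGroup V] [Module (ZMod 2) V] [Finite V] :
    Nat.card V = 2 ^ Module.finrank (ZMod 2) V := by
  have := Fintype.ofFinite V
  rw [Nat.card_eq_fintype_card, Module.card_eq_pow_finrank (K := ZMod 2), ZMod.card]

lemma Module.Basis.exists_finset_sum_eq {V ι : Type*} [AddCommGroup V] [Module (ZMod 2) V]
    [Fintype ι] (b : Module.Basis ι (ZMod 2) V) (x : V) : ∃ s : Finset ι, ∑ i ∈ s, b i = x := by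
  classical
  refine ⟨Finset.univ.filter (b.repr x · ≠ 0), ?_⟩
  conv_rhs => rw [← b.sum_repr x]
  rw [Finset.sum_filter]
  refine Finset.sum_congr rfl fun i _ => ?_
  generalize b.repr x i = c
  obtain rfl | rfl : c = 0 ∨ c = 1 := by decide +revert
  all_goals simp

lemma AddSubgroup.exists_finset_sum_sub_mem {G : Type*} [AddCommGroup G] [Finite G]
    (H : AddSubgroup G) (h2 : ∀ g : G, 2 • g ∈ H) {m : ℕ}
    (hcard : Nat.card G = 2 ^ m * Nat.card H) :
    ∃ u : Fin m → G, ∀ g, ∃ s : Finset (Fin m), g - ∑ i ∈ s, u i ∈ H := by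
  let _ : Module (ZMod 2) (G ⧸ H) := QuotientAddGroup.zmodModule h2
  have hQ : Nat.card (G ⧸ H) = 2 ^ m := by
    rw [H.card_eq_card_quotient_mul_card_addSubgroup] at hcard
    exact Nat.eq_of_mul_eq_mul_right Nat.card_pos hcard
  have hrank : Module.finrank (ZMod 2) (G ⧸ H) = m :=
    Nat.pow_right_injective le_rfl <| (natCard_eq_two_pow_finrank _).symm.trans hQ
  let b := Module.finBasisOfFinrankEq (ZMod 2) (G ⧸ H) hrank
  choose u hu using fun i => QuotientAddGroup.mk_surjective (b i)
  refine ⟨u, fun g => ?_⟩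
  obtain ⟨s, hs⟩ := b.exists_finset_sum_eq g
  refine ⟨s, (QuotientAddGroup.eq_zero_iff _).mp ?_⟩
  rw [QuotientAddGroup.mk_sub, QuotientAddGroup.mk_sum, ← hs]
  simp [hu]

variable {α β : ℕ}

lemma Phi_injective : Function.Injective (Phi (α := α) (β := β)) := by
  have hgray : Function.Injective grayPair := by decide
  intro u v h
  simp only [Phi, Prod.mk.injEq] at h
  exact Prod.ext h.1 (funext fun i => hgray (congrFun h.2 i))

lemma Phi_zero : Phi (0 : Amb α β) = 0 := rfl

lemma four_mul_eq_zero (u : Amb α β) : 4 * u = 0 := by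
  have h2 : ∀ a : ZMod 2, 4 * a = 0 := by decide
  have h4 : ∀ a : ZMod 4, 4 * a = 0 := by decide
  exact Prod.ext (funext fun i => h2 (u.1 i)) (funext fun i => h4 (u.2 i))

lemma Phi_add (u v : Amb α β) : Phi (u + v) = Phi u + Phi v + Phi (2 * (u * v)) := by
  have h2 : ∀ a b : ZMod 2, a + b = a + b + 2 * (a * b) := by decide
  have h4 : ∀ a b : ZMod 4,
      grayPair (a + b) = grayPair a + grayPair b + grayPair (2 * (a * b)) := by
    decide
  exact Prod.ext (funext fun i => h2 (u.1 i) (v.1 i)) (funext fun i => h4 (u.2 i) (v.2 i))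

lemma Phi_add_two_mul (u v : Amb α β) : Phi (u + 2 * v) = Phi u + Phi (2 * v) := by
  rw [Phi_add, show 2 * (u * (2 * v)) = 4 * (u * v) by ring, four_mul_eq_zero, Phi_zero, add_zero]

lemma Phi_add_Phi (u v : Amb α β) : Phi u + Phi v = Phi (u + v + 2 * (u * v)) := by
  rw [Phi_add_two_mul, Phi_add, add_assoc, ZModModule.add_self, add_zero]

lemma Phi_two_mul_sum {ι : Type*} (s : Finset ι) (v : ι → Amb α β) :
    Phi (2 * ∑ i ∈ s, v i) = ∑ i ∈ s, Phi (2 * v i) :=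
  map_sum (AddMonoidHom.mk' (fun v : Amb α β => Phi (2 * v)) fun v w => by
    rw [mul_add, Phi_add_two_mul]) v s

lemma Phi_sum_mem {ι : Type*} (T : Submodule (ZMod 2) (Bin α β)) (s : Finset ι)
    (x : ι → Amb α β) (h₁ : ∀ i ∈ s, Phi (x i) ∈ T)
    (h₂ : ∀ i ∈ s, ∀ j ∈ s, i ≠ j → Phi (2 * (x i * x j)) ∈ T) :
    Phi (∑ i ∈ s, x i) ∈ T := by
  induction s using Finset.cons_induction with
  | empty => exact Phi_zero ▸ T.zero_mem
  | cons j s hj ih =>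
    simp only [Finset.mem_cons, forall_eq_or_imp] at h₁ h₂
    rw [Finset.sum_cons, Phi_add, Finset.mul_sum, Phi_two_mul_sum]
    refine T.add_mem (T.add_mem h₁.1 (ih h₁.2 fun i hi k hk => (h₂.2 i hi).2 k hk)) ?_
    exact T.sum_mem fun i hi => h₂.1.2 i hi (ne_of_mem_of_not_mem hi hj).symm

lemma kernelK_eq_stabilizer (D : Set (Bin α β)) :
    kernelK D = (AddAction.stabilizer (Bin α β) D : Set (Bin α β)) := rfl

lemma natCard_kernelK (D : Set (Bin α β)) : Nat.card (kernelK D) = 2 ^ kerDim D := by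
  rw [kerDim, kernelK_eq_stabilizer, ← AddSubgroup.coe_toZModSubmodule 2, Submodule.span_eq,
    ← natCard_eq_two_pow_finrank]
  rfl

lemma rankOf_le_kerDim (D : Set (Bin α β)) (hD : 2 ^ rankOf D ≤ Nat.card D) :
    rankOf D ≤ kerDim D := by
  set V := Submodule.span (ZMod 2) D
  have hDV : D = V := by
    refine Set.eq_of_subset_of_ncard_le Submodule.subset_span ?_ (Set.toFinite _)
    rw [← Nat.card_coe_set_eq, ← Nat.card_coe_set_eq]
    exact (natCard_eq_two_pow_finrank V).trans_le hD
  have hVK : (V : Set (Bin α β)) ⊆ kernelK D := fun x hx => by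
    rw [hDV]
    exact vadd_coe_set hx
  exact Submodule.finrank_mono (Submodule.span_mono (hDV.trans_subset hVK))

def kernelCode (C : AddSubgroup (Amb α β)) : AddSubgroup (Amb α β) where
  carrier := {u | u ∈ C ∧ ∀ v ∈ C, 2 * (u * v) ∈ C}
  zero_mem' := ⟨C.zero_mem, fun v _ => by simp⟩
  add_mem' := fun ha hb => ⟨C.add_mem ha.1 hb.1, fun v hv => by
    simpa only [add_mul, mul_add] using C.add_mem (ha.2 v hv) (hb.2 v hv)⟩
  neg_mem' := fun ha => ⟨C.neg_mem ha.1, fun v hv => by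
    simpa only [neg_mul, mul_neg] using C.neg_mem (ha.2 v hv)⟩

section kernelCode

variable {C : AddSubgroup (Amb α β)}

lemma kernelCode_le : kernelCode C ≤ C := fun _ hu => hu.1

lemma two_mul_mem_kernelCode {x : Amb α β} (hx : 2 * x ∈ C) : 2 * x ∈ kernelCode C :=
  ⟨hx, fun v _ => by
    rw [← mul_assoc, ← mul_assoc, show (2 : Amb α β) * 2 = 4 by norm_num, mul_assoc,
      four_mul_eq_zero]
    exact C.zero_mem⟩

lemma kernelK_image_Phi :
    kernelK (Phi '' (C : Set (Amb α β))) = Phi '' (kernelCode C : Set (Amb α β)) := by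
  ext x
  constructor
  · intro hx
    obtain ⟨u, hu, rfl⟩ : x ∈ Phi '' C := by
      simpa [Phi_zero] using hx.subset ⟨Phi 0, ⟨0, C.zero_mem, rfl⟩, rfl⟩
    refine ⟨u, ⟨hu, fun v hv => ?_⟩, rfl⟩
    obtain ⟨w, hw, hwuv⟩ : Phi u + Phi v ∈ Phi '' C := hx.subset ⟨Phi v, ⟨v, hv, rfl⟩, rfl⟩
    rw [Phi_add_Phi] at hwuv
    have : 2 * (u * v) = w - u - v := by rw [Phi_injective hwuv]; ring
    exact this ▸ C.sub_mem (C.sub_mem hw hu) hv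
  · rintro ⟨u, hu, rfl⟩
    have hsub : (Phi u + ·) '' (Phi '' C) ⊆ Phi '' C := by
      rintro _ ⟨_, ⟨v, hv, rfl⟩, rfl⟩
      exact ⟨_, C.add_mem (C.add_mem hu.1 hv) (hu.2 v hv), (Phi_add_Phi u v).symm⟩
    -- translation by `Φ(u)` is an involution, so it maps `Φ(C)` onto itself
    refine hsub.antisymm fun y hy => ⟨Phi u + y, hsub ⟨y, hy, rfl⟩, ?_⟩
    simp only [← add_assoc, ZModModule.add_self, zero_add]

lemma natCard_kernelCode : Nat.card (kernelCode C) = 2 ^ kerDim (Phi '' (C : Set (Amb α β))) := by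
  rw [← natCard_kernelK, kernelK_image_Phi, Nat.card_image_of_injective Phi_injective]
  rfl

lemma exists_sum_sub_mem_kernelCode {m : ℕ}
    (hC : Nat.card C = 2 ^ m * 2 ^ kerDim (Phi '' (C : Set (Amb α β)))) :
    ∃ u : Fin m → Amb α β, (∀ i, u i ∈ C) ∧
      ∀ w ∈ C, ∃ s : Finset (Fin m), w - ∑ i ∈ s, u i ∈ kernelCode C := by
  have hK : Nat.card ((kernelCode C).addSubgroupOf C) = Nat.card (kernelCode C) :=
    Nat.card_congr (AddSubgroup.addSubgroupOfEquivOfLe kernelCode_le).toEquiv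
  obtain ⟨u, hu⟩ := ((kernelCode C).addSubgroupOf C).exists_finset_sum_sub_mem
    (fun w => by
      simpa [AddSubgroup.mem_addSubgroupOf, two_nsmul, ← two_mul] using
        two_mul_mem_kernelCode (x := (w : Amb α β)) (by simpa [two_mul] using C.add_mem w.2 w.2))
    (hC.trans (by rw [hK, natCard_kernelCode]))
  refine ⟨fun i => u i, fun i => (u i).2, fun w hw => ?_⟩
  obtain ⟨s, hs⟩ := hu ⟨w, hw⟩
  exact ⟨s, by simpa [AddSubgroup.mem_addSubgroupOf] using hs⟩

lemma rankOf_image_Phi_le {ι : Type*} [Fintype ι] (u : ι → Amb α β) (hu : ∀ i, u i ∈ C)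
    (hgen : ∀ w ∈ C, ∃ s : Finset ι, w - ∑ i ∈ s, u i ∈ kernelCode C) :
    rankOf (Phi '' (C : Set (Amb α β))) ≤
      kerDim (Phi '' (C : Set (Amb α β))) + Fintype.card ι + (Fintype.card ι).choose 2 := by
  classical
  let cross (z : {z : Sym2 ι // ¬z.IsDiag}) : Bin α β :=
    Phi (2 * Sym2.lift ⟨fun i j => u i * u j, fun i j => mul_comm _ _⟩ z.1)
  let K := Submodule.span (ZMod 2) (kernelK (Phi '' (C : Set (Amb α β))))
  let T := K ⊔ Submodule.span (ZMod 2) (Set.range (Phi ∘ u)) ⊔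
    Submodule.span (ZMod 2) (Set.range cross)
  have hK : ∀ k ∈ kernelCode C, Phi k ∈ T := fun k hk =>
    (le_sup_left.trans le_sup_left : K ≤ T) (Submodule.subset_span (by
      rw [kernelK_image_Phi]; exact ⟨k, hk, rfl⟩))
  have hcover : Phi '' (C : Set (Amb α β)) ⊆ T := by
    rintro _ ⟨w, hw, rfl⟩
    obtain ⟨s, hs⟩ := hgen w hw
    have hsum : Phi (∑ i ∈ s, u i) ∈ T := by
      refine Phi_sum_mem T s u (fun i _ => ?_) (fun i _ j _ hij => ?_)
      · exact (le_sup_right.trans le_sup_left : _ ≤ T) (Submodule.subset_span ⟨i, rfl⟩)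
      · exact (le_sup_right : _ ≤ T) (Submodule.subset_span ⟨⟨s(i, j), by simpa using hij⟩, rfl⟩)
    have hcross : 2 * ((w - ∑ i ∈ s, u i) * ∑ i ∈ s, u i) ∈ kernelCode C :=
      two_mul_mem_kernelCode (hs.2 _ (C.sum_mem fun i _ => hu i))
    rw [← sub_add_cancel w (∑ i ∈ s, u i), Phi_add]
    exact T.add_mem (T.add_mem (hK _ hs) hsum) (hK _ hcross)
  calc rankOf (Phi '' (C : Set (Amb α β)))
      ≤ Module.finrank (ZMod 2) T := Submodule.finrank_mono (Submodule.span_le.mpr hcover)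
    _ ≤ Module.finrank (ZMod 2) K + (Set.range (Phi ∘ u)).finrank (ZMod 2) +
          (Set.range cross).finrank (ZMod 2) := by
      grw [Submodule.finrank_add_le_finrank_add_finrank,
        Submodule.finrank_add_le_finrank_add_finrank]
      rfl
    _ ≤ _ := by
      grw [finrank_range_le_card, finrank_range_le_card, Sym2.card_subtype_not_diag]
      rfl

end kernelCode

/-- if `rank(C) = γ+2δ+r̄` and `ker(C) = γ+2δ−k̄` with `k̄ ≥ 2`, then
`1 ≤ r̄ ≤ k̄(k̄−1)/2`. -/
theorem rank_bound_of_kernel (α β γ δ κ rb kb : ℕ) (C : AddSubgroup (Amb α β))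
    (h : IsTypeOf α β γ δ κ C)
    (hrank : rankOf (Phi '' (C : Set (Amb α β))) = γ + 2 * δ + rb)
    (hker : kerDim (Phi '' (C : Set (Amb α β))) + kb = γ + 2 * δ)
    (hk : 2 ≤ kb) :
    1 ≤ rb ∧ rb ≤ kb * (kb - 1) / 2 := by
  obtain ⟨hcard, -, -⟩ := h
  refine ⟨?_, ?_⟩
  · by_contra! hrb
    have hle := rankOf_le_kerDim (Phi '' (C : Set (Amb α β))) (by
      rw [Nat.card_image_of_injective Phi_injective, hrank]
      exact (Nat.pow_le_pow_right two_pos (by omega)).trans hcard.ge)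
    omega
  · obtain ⟨u, hu, hgen⟩ := exists_sum_sub_mem_kernelCode (m := kb) (C := C)
      (by rw [hcard, ← pow_add, ← hker, add_comm])
    have hle := rankOf_image_Phi_le u hu hgen
    rw [Fintype.card_fin, Nat.choose_two_right] at hle
    omega
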